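/- Consider the CRP model with a strictly increasing departure schedule d and no upper time windows. For every FCFS-feasible sequence M there exists an FCFS-feasible sequence M' from the same initial configuration such that: the relocation count of M' equals the relocation count of M; every container is retrieved in M' no later than in M (r'(n) ≤ r(n) for all n); and for every time-step t of M', if some container is available at t then the move of M' at t is not idle. -/

import Mathlib

/-! ## The container relocation problem (CRP) model

A bay with `C` columns and at most `P` tiers, containing containers labeled `1,…,N`.
A configuration assigns to each column its stack of container labels; in our encoding the
*head* of the list is the *top* of the stack. -/

/-- A bay configuration: for each column, the stack of container labels in it
(head of the list = top of the stack). -/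
abbrev CRPConfig (C : ℕ) := Fin C → List ℕ

/-- A crane move: idle (no change), relocation of the top container of column `src`
onto column `dst`, or retrieval of the top container of column `src` out of the bay. -/
inductive CRPMove (C : ℕ) where
  | idle : CRPMove C
  | reloc (src dst : Fin C) : CRPMove C
  | retrieve (src : Fin C) : CRPMove C

/-- Whether a move is a relocation. -/
def CRPMove.isReloc {C : ℕ} : CRPMove C → Bool
  | .reloc _ _ => true
  | _ => false

/-- `CRPStep P b mv b'` holds when the move `mv` is applicable to configuration `b`
(with height limit `P`) and transforms it into `b'`. -/
def CRPStep {C : ℕ} (P : ℕ) (b : CRPConfig C) : CRPMove C → CRPConfig C → Prop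
  | .idle, b' => b' = b
  | .reloc i k, b' =>
      i ≠ k ∧ b i ≠ [] ∧ (b k).length < P ∧
      b' = fun j => if j = i then (b i).tail
                    else if j = k then (b i).head! :: b k else b j
  | .retrieve i, b' =>
      b i ≠ [] ∧ b' = fun j => if j = i then (b i).tail else b j

/-- A move sequence over horizon `T` for a `C × P` bay with containers `1,…,N`:
`conf 0` is the initial configuration, in which all `N` containers (and nothing else)
are present, each at most once, with stacks of height at most `P`; `mv t` is the move
performed at time-step `t ∈ {1,…,T}`, and `conf t` the configuration after it. -/
structure CRPSeq (C P N T : ℕ) where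
  conf : ℕ → CRPConfig C
  mv : ℕ → CRPMove C
  init_height : ∀ i, (conf 0 i).length ≤ P
  init_labels : ∀ i, ∀ c ∈ conf 0 i, 1 ≤ c ∧ c ≤ N
  init_nodup : ∀ i, (conf 0 i).Nodup
  init_disjoint : ∀ i j, i ≠ j → ∀ c, c ∈ conf 0 i → c ∉ conf 0 j
  init_all : ∀ n, 1 ≤ n → n ≤ N → ∃ i, n ∈ conf 0 i
  step : ∀ t, 1 ≤ t → t ≤ T → CRPStep P (conf (t - 1)) (mv t) (conf t)

/-- The relocation count of a move sequence: the number of time-steps in `{1,…,T}` whose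
move is a relocation. -/
def relocCount {C P N T : ℕ} (M : CRPSeq C P N T) : ℕ :=
  ((Finset.Icc 1 T).filter (fun t => (M.mv t).isReloc = true)).card

/-- Container `n` is retrieved at time-step `t` in the sequence `M`. -/
def RetrievesAt {C P N T : ℕ} (M : CRPSeq C P N T) (n t : ℕ) : Prop :=
  1 ≤ t ∧ t ≤ T ∧ ∃ i : Fin C, M.mv t = .retrieve i ∧ (M.conf (t - 1) i).head? = some n

/-- Container `n` is still in the bay at the beginning of time-step `t`. -/
def InBay {C P N T : ℕ} (M : CRPSeq C P N T) (n t : ℕ) : Prop :=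
  ∃ i : Fin C, n ∈ M.conf (t - 1) i

/-- Container `n` is available at time-step `t`: its departure time has come and it is
still in the bay at the beginning of step `t`. -/
def AvailableAt {C P N T : ℕ} (M : CRPSeq C P N T) (d : ℕ → ℕ) (n t : ℕ) : Prop :=
  1 ≤ n ∧ n ≤ N ∧ d n ≤ t ∧ InBay M n t

/-- `M` is a feasible sequence with flexibility level `m` for departure schedule `d`,
with retrieval times `r`: every container `n ∈ {1,…,N}` is retrieved exactly once, at
time `r n ≥ d n`, and for every `n` at most `(n−1)+m` containers are retrieved before
container `n`.  Flexibility level `0` is FCFS-feasibility (containers retrieved exactly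
in the order `1,…,N`). -/
structure CRPFeasible {C P N T : ℕ} (M : CRPSeq C P N T) (d : ℕ → ℕ) (m : ℕ)
    (r : ℕ → ℕ) : Prop where
  retrieves : ∀ n, 1 ≤ n → n ≤ N → RetrievesAt M n (r n)
  unique : ∀ n t, 1 ≤ n → n ≤ N → RetrievesAt M n t → t = r n
  onTime : ∀ n, 1 ≤ n → n ≤ N → d n ≤ r n
  flex : ∀ n, 1 ≤ n → n ≤ N →
    {n' | 1 ≤ n' ∧ n' ≤ N ∧ r n' < r n}.ncard ≤ (n - 1) + m

/-- A strictly increasing departure schedule on `{1,…,N}` with `d 1 ≥ 1`. -/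
def StrictSchedule (N : ℕ) (d : ℕ → ℕ) : Prop :=
  1 ≤ d 1 ∧ ∀ n n', 1 ≤ n → n' ≤ N → n < n' → d n < d n'

/-- The set of relocation counts of FCFS-feasible sequences (over all horizons `T`) from
the initial configuration `b0`, for departure schedule `d`. -/
def FCFSRelocSet (C P N : ℕ) (d : ℕ → ℕ) (b0 : CRPConfig C) : Set ℕ :=
  {R | ∃ T, ∃ M : CRPSeq C P N T, ∃ r,
        M.conf 0 = b0 ∧ CRPFeasible M d 0 r ∧ relocCount M = R}

/-! Fill, one at a time, the first idle step `t` at which some container is available: since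
nothing happens between `t` and the next non-idle move `t'`, that move can be performed at `t`
instead. The moves, hence the relocations, are unchanged, and only the container retrieved at
`t'` (if any) changes its retrieval time, to `t`. It leaves no later than the available
container, so under FCFS it has a smaller label and its departure time has already passed.
Steps before `t` are untouched, so after at most `T` such rounds no bad step is left. -/

namespace CRPConfig

variable {C : ℕ}

def count (b : CRPConfig C) (n : ℕ) : ℕ := ∑ j, (b j).count n

theorem count_pos_iff {b : CRPConfig C} {n : ℕ} : 0 < b.count n ↔ ∃ j, n ∈ b j := by
  simp [count, Finset.sum_pos_iff, List.count_pos_iff]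

theorem count_update (b : CRPConfig C) (i : Fin C) (l : List ℕ) (n : ℕ) :
    CRPConfig.count (Function.update b i l) n + (b i).count n = b.count n + l.count n := by
  conv_rhs => rw [← Function.update_eq_self i b]
  simp only [count, Function.apply_update (fun _ l => List.count n l),
    Finset.sum_update_of_mem (Finset.mem_univ i)]
  ring

end CRPConfig

namespace CRPStep

variable {C P : ℕ} {b b' : CRPConfig C}

theorem eq_update_of_reloc {i k : Fin C} (h : CRPStep P b (.reloc i k) b') :
    b' = Function.update (Function.update b k ((b i).head! :: b k)) i (b i).tail := by
  obtain ⟨-, -, -, rfl⟩ := h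
  ext1 j
  by_cases hj : j = i
  · subst hj; simp
  · simp [hj, Function.update_apply]

theorem eq_update_of_retrieve {i : Fin C} (h : CRPStep P b (.retrieve i) b') :
    b' = Function.update b i (b i).tail := by
  obtain ⟨-, rfl⟩ := h
  ext1 j
  simp [Function.update_apply]

theorem count_retrieve {i : Fin C} {n : ℕ} (h : CRPStep P b (.retrieve i) b')
    (hn : (b i).head? = some n) : b'.count n + 1 = b.count n := by
  obtain ⟨l, hl⟩ := List.head?_eq_some_iff.1 hn
  have := b.count_update i (b i).tail n
  rw [h.eq_update_of_retrieve]
  simp only [hl, List.tail_cons, List.count_cons_self] at this ⊢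
  omega

theorem count_le {mv : CRPMove C} (h : CRPStep P b mv b') (n : ℕ) : b'.count n ≤ b.count n := by
  cases mv with
  | idle => exact (congrArg (CRPConfig.count · n) (show b' = b from h)).le
  | reloc i k =>
    obtain ⟨hik, hne, -, -⟩ := id h
    obtain ⟨c, l, hl⟩ := List.exists_cons_of_ne_nil hne
    have h₁ := b.count_update k (c :: b k) n
    have h₂ := CRPConfig.count_update (Function.update b k (c :: b k)) i l n
    rw [h.eq_update_of_reloc, hl]
    simp only [Function.update_of_ne hik, hl, List.head!_cons, List.tail_cons,
      List.count_cons] at h₁ h₂ ⊢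
    omega
  | retrieve i =>
    obtain ⟨c, l, hl⟩ := List.exists_cons_of_ne_nil h.1
    have := b.count_update i l n
    rw [h.eq_update_of_retrieve, hl]
    simp only [hl, List.tail_cons, List.count_cons] at this ⊢
    omega

end CRPStep

namespace CRPSeq

variable {C P N T : ℕ} (M : CRPSeq C P N T)

theorem step_succ {s : ℕ} (hs : s < T) :
    CRPStep P (M.conf s) (M.mv (s + 1)) (M.conf (s + 1)) := by
  simpa using M.step (s + 1) (by omega) hs

theorem count_conf_zero_le_one (n : ℕ) : (M.conf 0).count n ≤ 1 := by
  by_cases h : ∃ i, n ∈ M.conf 0 i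
  · obtain ⟨i, hi⟩ := h
    rw [CRPConfig.count, Finset.sum_eq_single i]
    · exact List.nodup_iff_count_le_one.1 (M.init_nodup i) n
    · exact fun j _ hji => List.count_eq_zero.2 (M.init_disjoint i j hji.symm n hi)
    · simp
  · simp only [not_exists] at h
    simp [CRPConfig.count, List.count_eq_zero.2 (h _)]

theorem count_conf_antitone {s u : ℕ} (hsu : s ≤ u) (hu : u ≤ T) (n : ℕ) :
    (M.conf u).count n ≤ (M.conf s).count n := by
  induction u, hsu using Nat.le_induction with
  | base => exact le_rfl
  | succ u _ ih => exact ((M.step_succ hu).count_le n).trans (ih (by omega))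

theorem conf_eq_of_idle {a b : ℕ} (hab : a ≤ b) (hb : b ≤ T)
    (hidle : ∀ s, a < s → s ≤ b → M.mv s = .idle) : M.conf b = M.conf a := by
  induction b, hab using Nat.le_induction with
  | base => rfl
  | succ b _ ih =>
    have hstep := M.step_succ hb
    rw [hidle (b + 1) (by omega) le_rfl] at hstep
    exact hstep.trans (ih (by omega) fun s h₁ h₂ => hidle s h₁ (by omega))

end CRPSeq

namespace RetrievesAt

variable {C P N T : ℕ} {M : CRPSeq C P N T} {n s : ℕ}

theorem eq_of_retrievesAt {n' : ℕ} (h : RetrievesAt M n s) (h' : RetrievesAt M n' s) :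
    n = n' := by
  obtain ⟨-, -, i, hi, hn⟩ := h
  obtain ⟨-, -, i', hi', hn'⟩ := h'
  cases hi.symm.trans hi'
  exact Option.some.inj (hn.symm.trans hn')

theorem notMem_conf (h : RetrievesAt M n s) {u : ℕ} (hsu : s ≤ u) (hu : u ≤ T) (j : Fin C) :
    n ∉ M.conf u j := by
  obtain ⟨hs, hsT, i, hi, hn⟩ := h
  have hstep := M.step s hs hsT
  rw [hi] at hstep
  -- The label occurs at most once initially and no move adds occurrences.
  have hgone : (M.conf s).count n = 0 := by
    have hdrop := hstep.count_retrieve hn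
    have hbefore := M.count_conf_antitone (Nat.zero_le (s - 1)) (by omega) n
    have hinit := M.count_conf_zero_le_one n
    omega
  intro hj
  have hafter := M.count_conf_antitone hsu hu n
  have hpos := CRPConfig.count_pos_iff.2 ⟨j, hj⟩
  omega

end RetrievesAt

namespace CRPFeasible

variable {C P N T : ℕ} {M : CRPSeq C P N T} {d r : ℕ → ℕ}

theorem le_of_inBay {m : ℕ} (hM : CRPFeasible M d m r) {n t : ℕ} (hn : 1 ≤ n) (hnN : n ≤ N)
    (hin : InBay M n t) (ht : t ≤ T) : t ≤ r n := by
  by_contra! h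
  obtain ⟨j, hj⟩ := hin
  have hr := hM.retrieves n hn hnN
  exact hr.notMem_conf (u := t - 1) (by omega) (by omega) j hj

theorem strictMonoOn_of_fcfs (hM : CRPFeasible M d 0 r) : StrictMonoOn r (Set.Icc 1 N) := by
  suffices key : ∀ m k, 1 ≤ m → m < k → k ≤ N → r m < r k from
    fun m hm k hk hmk => key m k hm.1 hmk hk.2
  intro m
  induction m using Nat.strong_induction_on with
  | _ m ih =>
    intro k hm hmk hkN
    by_contra! hle
    have hne : r k ≠ r m := fun h => by
      have hkm := (hM.retrieves k (by omega) hkN).eq_of_retrievesAt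
        (h ▸ hM.retrieves m hm (by omega))
      omega
    -- `k` and all of `1, …, m - 1` are retrieved before `m`: `m` containers, one too many.
    have hsub : (↑(insert k (Finset.Icc 1 (m - 1))) : Set ℕ) ⊆
        {n' | 1 ≤ n' ∧ n' ≤ N ∧ r n' < r m} := by
      intro a ha
      simp only [Finset.coe_insert, Finset.coe_Icc, Set.mem_insert_iff, Set.mem_Icc] at ha
      rcases ha with rfl | ⟨ha, ham⟩
      · exact ⟨by omega, hkN, lt_of_le_of_ne hle hne⟩
      · exact ⟨ha, by omega, ih a (by omega) m ha (by omega) (by omega)⟩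
    have hcard :=
      Set.ncard_le_ncard hsub ((Set.finite_Icc 1 N).subset fun a ha => ⟨ha.1, ha.2.1⟩)
    rw [Set.ncard_coe_finset, Finset.card_insert_of_notMem (by simp; omega),
      Nat.card_Icc] at hcard
    have hflex := hM.flex m hm (by omega)
    omega

end CRPFeasible

theorem Nat.swap_lt_swap_iff_of_notMem_Ico {t t' a b : ℕ} (htt' : t < t')
    (ha : a < t ∨ t' ≤ a) (hb : b < t ∨ t' ≤ b) :
    Equiv.swap t t' a < Equiv.swap t t' b ↔ a < b := by
  simp only [Equiv.swap_apply_def]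
  split_ifs <;> omega

namespace CRPSeq

variable {C P N T : ℕ} (M : CRPSeq C P N T)

def shiftConf (t t' : ℕ) (s : ℕ) : CRPConfig C :=
  if t ≤ s ∧ s < t' then M.conf t' else M.conf s

theorem shiftConf_of_lt {t t' s : ℕ} (h : s < t) : M.shiftConf t t' s = M.conf s :=
  if_neg (by omega)

theorem shiftConf_of_le {t t' s : ℕ} (h : t' ≤ s) : M.shiftConf t t' s = M.conf s :=
  if_neg (by omega)

theorem shiftConf_of_mem {t t' s : ℕ} (h₁ : t ≤ s) (h₂ : s < t') :
    M.shiftConf t t' s = M.conf t' :=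
  if_pos ⟨h₁, h₂⟩

variable {t t' : ℕ} (ht : 1 ≤ t) (htt' : t < t') (ht'T : t' ≤ T)
  (hidle : ∀ s, t ≤ s → s < t' → M.mv s = .idle)

/-- The move at `t'` brought forward to the idle step `t`. -/
def shift : CRPSeq C P N T where
  conf := M.shiftConf t t'
  mv s := M.mv (Equiv.swap t t' s)
  init_height := by rw [M.shiftConf_of_lt (by omega)]; exact M.init_height
  init_labels := by rw [M.shiftConf_of_lt (by omega)]; exact M.init_labels
  init_nodup := by rw [M.shiftConf_of_lt (by omega)]; exact M.init_nodup
  init_disjoint := by rw [M.shiftConf_of_lt (by omega)]; exact M.init_disjoint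
  init_all := by rw [M.shiftConf_of_lt (by omega)]; exact M.init_all
  step s hs hsT := by
    have hconst : M.conf (t' - 1) = M.conf (t - 1) :=
      M.conf_eq_of_idle (by omega) (by omega) fun u h₁ h₂ => hidle u (by omega) (by omega)
    rcases lt_trichotomy s t with hst | rfl | hst
    · rw [M.shiftConf_of_lt (by omega), M.shiftConf_of_lt hst,
        Equiv.swap_apply_of_ne_of_ne (by omega) (by omega)]
      exact M.step s hs hsT
    · rw [M.shiftConf_of_lt (by omega), M.shiftConf_of_mem le_rfl htt', Equiv.swap_apply_left,
        ← hconst]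
      exact M.step t' (by omega) ht'T
    · rcases lt_or_ge t' s with hs't | hs't
      · rw [M.shiftConf_of_le (by omega), M.shiftConf_of_le (by omega),
          Equiv.swap_apply_of_ne_of_ne (by omega) (by omega)]
        exact M.step s hs hsT
      · have hmv : M.mv (Equiv.swap t t' s) = .idle := by
          rcases hs't.lt_or_eq with h | rfl
          · rw [Equiv.swap_apply_of_ne_of_ne (by omega) (by omega)]
            exact hidle s (by omega) h
          · rw [Equiv.swap_apply_right]
            exact hidle t le_rfl htt'
        rw [hmv, M.shiftConf_of_mem (by omega) (by omega)]
        rcases hs't.lt_or_eq with h | rfl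
        · exact M.shiftConf_of_mem (by omega) h
        · exact M.shiftConf_of_le le_rfl

theorem shift_conf_zero : (M.shift ht htt' ht'T hidle).conf 0 = M.conf 0 :=
  M.shiftConf_of_lt (by omega)

theorem shift_mv_of_lt {s : ℕ} (hs : s < t) : (M.shift ht htt' ht'T hidle).mv s = M.mv s :=
  congrArg M.mv (Equiv.swap_apply_of_ne_of_ne (by omega) (by omega))

theorem shift_mv_self : (M.shift ht htt' ht'T hidle).mv t = M.mv t' :=
  congrArg M.mv (Equiv.swap_apply_left t t')

theorem relocCount_shift : relocCount (M.shift ht htt' ht'T hidle) = relocCount M := by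
  simp only [relocCount, Finset.card_filter]
  refine Equiv.Perm.sum_comp (Equiv.swap t t') _
    (fun s => if (M.mv s).isReloc = true then 1 else 0) fun s hs => ?_
  obtain ⟨-, rfl | rfl⟩ := Equiv.swap_apply_ne_self_iff.1 hs <;> simp <;> omega

theorem availableAt_shift_iff {d : ℕ → ℕ} {n s : ℕ} (hs : s ≤ t) :
    AvailableAt (M.shift ht htt' ht'T hidle) d n s ↔ AvailableAt M d n s := by
  simp only [AvailableAt, InBay, shift, M.shiftConf_of_lt (show s - 1 < t by omega)]

theorem retrievesAt_shift_iff {n s : ℕ} :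
    RetrievesAt (M.shift ht htt' ht'T hidle) n s ↔ RetrievesAt M n (Equiv.swap t t' s) := by
  have hbounds :
      (1 ≤ s ∧ s ≤ T) ↔ (1 ≤ Equiv.swap t t' s ∧ Equiv.swap t t' s ≤ T) := by
    rw [Equiv.swap_apply_def]; split_ifs <;> omega
  have hconf : M.mv (Equiv.swap t t' s) ≠ .idle →
      M.shiftConf t t' (s - 1) = M.conf (Equiv.swap t t' s - 1) := by
    intro hmv
    rcases lt_trichotomy s t with hst | rfl | hst
    · rw [M.shiftConf_of_lt (by omega), Equiv.swap_apply_of_ne_of_ne (by omega) (by omega)]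
    · rw [M.shiftConf_of_lt (by omega), Equiv.swap_apply_left]
      exact (M.conf_eq_of_idle (by omega) (by omega)
        fun u h₁ h₂ => hidle u (by omega) (by omega)).symm
    · have hs't : t' < s := by
        by_contra! h
        rcases h.lt_or_eq with h | rfl
        · rw [Equiv.swap_apply_of_ne_of_ne (by omega) (by omega)] at hmv
          exact hmv (hidle s hst.le h)
        · rw [Equiv.swap_apply_right] at hmv
          exact hmv (hidle t le_rfl htt')
      rw [M.shiftConf_of_le (by omega), Equiv.swap_apply_of_ne_of_ne (by omega) (by omega)]
  simp only [RetrievesAt, shift, ← and_assoc, hbounds]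
  refine and_congr_right fun _ => exists_congr fun i => and_congr_right fun hi => ?_
  rw [hconf (by rw [hi]; exact nofun)]

end CRPSeq

namespace CRPFeasible

variable {C P N T : ℕ} {M : CRPSeq C P N T} {d r : ℕ → ℕ} {m t t' : ℕ}

theorem retrievalTime_notMem_Ico (hM : CRPFeasible M d m r)
    (hidle : ∀ s, t ≤ s → s < t' → M.mv s = .idle) {n : ℕ}
    (hn : 1 ≤ n) (hnN : n ≤ N) :
    r n < t ∨ t' ≤ r n := by
  by_contra! h
  obtain ⟨-, -, i, hi, -⟩ := hM.retrieves n hn hnN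
  rw [hidle (r n) h.1 h.2] at hi
  cases hi

theorem shift (hM : CRPFeasible M d m r) (ht : 1 ≤ t) (htt' : t < t') (ht'T : t' ≤ T)
    (hidle : ∀ s, t ≤ s → s < t' → M.mv s = .idle)
    (hdep : ∀ n, 1 ≤ n → n ≤ N → r n = t' → d n ≤ t) :
    CRPFeasible (M.shift ht htt' ht'T hidle) d m (Equiv.swap t t' ∘ r) where
  retrieves n hn hnN := by
    rw [CRPSeq.retrievesAt_shift_iff, Function.comp_apply, Equiv.swap_apply_self]
    exact hM.retrieves n hn hnN
  unique n s hn hnN hs := by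
    rw [CRPSeq.retrievesAt_shift_iff] at hs
    exact Equiv.swap_apply_eq_iff.1 (hM.unique n _ hn hnN hs)
  onTime n hn hnN := by
    by_cases h : r n = t'
    · rw [Function.comp_apply, h, Equiv.swap_apply_right]
      exact hdep n hn hnN h
    · have := hM.retrievalTime_notMem_Ico hidle hn hnN
      rw [Function.comp_apply, Equiv.swap_apply_of_ne_of_ne (by omega) h]
      exact hM.onTime n hn hnN
  flex n hn hnN := by
    have hset : {n' | 1 ≤ n' ∧ n' ≤ N ∧ Equiv.swap t t' (r n') < Equiv.swap t t' (r n)} =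
        {n' | 1 ≤ n' ∧ n' ≤ N ∧ r n' < r n} :=
      Set.ext fun n' => and_congr_right fun h₁ => and_congr_right fun h₂ =>
        Nat.swap_lt_swap_iff_of_notMem_Ico htt' (hM.retrievalTime_notMem_Ico hidle h₁ h₂)
          (hM.retrievalTime_notMem_Ico hidle hn hnN)
    exact hset ▸ hM.flex n hn hnN

theorem swap_retrievalTime_le (hM : CRPFeasible M d m r) (htt' : t < t')
    (hidle : ∀ s, t ≤ s → s < t' → M.mv s = .idle) {n : ℕ}
    (hn : 1 ≤ n) (hnN : n ≤ N) :
    Equiv.swap t t' (r n) ≤ r n := by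
  have := hM.retrievalTime_notMem_Ico hidle hn hnN
  rw [Equiv.swap_apply_def]
  split_ifs <;> omega

end CRPFeasible

def IdleWhileAvailable {C P N T : ℕ} (M : CRPSeq C P N T) (d : ℕ → ℕ) (t : ℕ) : Prop :=
  1 ≤ t ∧ t ≤ T ∧ (∃ n, AvailableAt M d n t) ∧ M.mv t = .idle

variable {C P N T : ℕ} {d r : ℕ → ℕ}

def FCFSImprovement (d : ℕ → ℕ) (M : CRPSeq C P N T) (r : ℕ → ℕ) (M' : CRPSeq C P N T)
    (r' : ℕ → ℕ) : Prop :=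
  M'.conf 0 = M.conf 0 ∧ CRPFeasible M' d 0 r' ∧ relocCount M' = relocCount M ∧
    ∀ n, 1 ≤ n → n ≤ N → r' n ≤ r n

theorem FCFSImprovement.refl {M : CRPSeq C P N T} (hM : CRPFeasible M d 0 r) :
    FCFSImprovement d M r M r :=
  ⟨rfl, hM, rfl, fun _ _ _ => le_rfl⟩

theorem FCFSImprovement.trans {M M' M'' : CRPSeq C P N T} {r' r'' : ℕ → ℕ}
    (h : FCFSImprovement d M r M' r') (h' : FCFSImprovement d M' r' M'' r'') :
    FCFSImprovement d M r M'' r'' :=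
  ⟨h'.1.trans h.1, h'.2.1, h'.2.2.1.trans h.2.2.1,
    fun n hn hnN => (h'.2.2.2 n hn hnN).trans (h.2.2.2 n hn hnN)⟩

theorem exists_fcfsImprovement_of_first_idleWhileAvailable (hd : StrictSchedule N d)
    {M : CRPSeq C P N T} (hM : CRPFeasible M d 0 r) {t : ℕ} (hbad : IdleWhileAvailable M d t)
    (hfirst : ∀ s < t, ¬IdleWhileAvailable M d s) :
    ∃ M₁ r₁, FCFSImprovement d M r M₁ r₁ ∧
      ∀ s < t + 1, ¬IdleWhileAvailable M₁ d s := by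
  classical
  obtain ⟨ht, htT, ⟨n₀, hn₀, hn₀N, hdn₀, hin₀⟩, hidle⟩ := hbad
  have hret₀ := hM.retrieves n₀ hn₀ hn₀N
  have hmv₀ : M.mv (r n₀) ≠ .idle := by
    obtain ⟨-, -, i, hi, -⟩ := hret₀
    simp [hi]
  have htr₀ : t < r n₀ :=
    (hM.le_of_inBay hn₀ hn₀N hin₀ htT).lt_of_ne fun h => hmv₀ (h ▸ hidle)
  have hex : ∃ s, t < s ∧ M.mv s ≠ .idle := ⟨r n₀, htr₀, hmv₀⟩
  set t' := Nat.find hex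
  obtain ⟨htt', ht'⟩ : t < t' ∧ M.mv t' ≠ .idle := Nat.find_spec hex
  have ht'r : t' ≤ r n₀ := Nat.find_min' hex ⟨htr₀, hmv₀⟩
  have ht'T : t' ≤ T := ht'r.trans hret₀.2.1
  have hgap : ∀ s, t ≤ s → s < t' → M.mv s = .idle := fun s h₁ h₂ => by
    rcases h₁.lt_or_eq with h₁ | rfl
    · by_contra h
      exact Nat.find_min hex h₂ ⟨h₁, h⟩
    · exact hidle
  have hdep : ∀ n, 1 ≤ n → n ≤ N → r n = t' → d n ≤ t := fun n hn hnN hrn => by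
    have hle : n ≤ n₀ :=
      (hM.strictMonoOn_of_fcfs.le_iff_le ⟨hn, hnN⟩ ⟨hn₀, hn₀N⟩).1 (hrn ▸ ht'r)
    rcases hle.lt_or_eq with hlt | rfl
    · exact (hd.2 n n₀ hn hn₀N hlt).le.trans hdn₀
    · exact hdn₀
  refine ⟨M.shift ht htt' ht'T hgap, Equiv.swap t t' ∘ r,
    ⟨M.shift_conf_zero .., hM.shift ht htt' ht'T hgap hdep, M.relocCount_shift ..,
      fun n hn hnN => hM.swap_retrievalTime_le htt' hgap hn hnN⟩, ?_⟩
  rintro s hs ⟨hs₁, hsT, hav, hmv⟩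
  rcases (Nat.lt_succ_iff.1 hs).lt_or_eq with hs | rfl
  · rw [M.shift_mv_of_lt _ _ _ _ hs] at hmv
    refine hfirst s hs ⟨hs₁, hsT, ?_, hmv⟩
    exact hav.imp fun n => (M.availableAt_shift_iff _ _ _ _ hs.le).1
  · exact ht' (by rwa [M.shift_mv_self] at hmv)

theorem exists_fcfsImprovement_forall_lt_not_idleWhileAvailable (hd : StrictSchedule N d)
    {M : CRPSeq C P N T} (hM : CRPFeasible M d 0 r) (k : ℕ) :
    ∃ M' r', FCFSImprovement d M r M' r' ∧ ∀ s < k, ¬IdleWhileAvailable M' d s := by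
  induction k with
  | zero => exact ⟨M, r, .refl hM, fun _ h => absurd h (Nat.not_lt_zero _)⟩
  | succ k ih =>
    obtain ⟨M', r', hM', hgood⟩ := ih
    by_cases hk : IdleWhileAvailable M' d k
    · obtain ⟨M'', r'', hM'', hgood''⟩ :=
        exists_fcfsImprovement_of_first_idleWhileAvailable hd hM'.2.1 hk hgood
      exact ⟨M'', r'', hM'.trans hM'', hgood''⟩
    · refine ⟨M', r', hM', fun s hs => ?_⟩
      rcases (Nat.lt_succ_iff.1 hs).lt_or_eq with hs | rfl
      exacts [hgood s hs, hk]

theorem stmt6_general (C P N : ℕ) (d : ℕ → ℕ) (hd : StrictSchedule N d)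
    (T : ℕ) (M : CRPSeq C P N T) (r : ℕ → ℕ) (hM : CRPFeasible M d 0 r) :
    ∃ T', ∃ M' : CRPSeq C P N T', ∃ r',
      M'.conf 0 = M.conf 0 ∧ CRPFeasible M' d 0 r' ∧
      relocCount M' = relocCount M ∧
      (∀ n, 1 ≤ n → n ≤ N → r' n ≤ r n) ∧
      ∀ t, 1 ≤ t → t ≤ T' → (∃ n, AvailableAt M' d n t) → M'.mv t ≠ CRPMove.idle := by
  obtain ⟨M', r', ⟨hconf, hfeas, hreloc, hr⟩, hgood⟩ :=
    exists_fcfsImprovement_forall_lt_not_idleWhileAvailable hd hM (T + 1)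
  exact ⟨T, M', r', hconf, hfeas, hreloc, hr,
    fun t ht htT hav hidle => hgood t (by omega) ⟨ht, htT, hav, hidle⟩⟩

/-- with a strictly increasing departure schedule `d` and no upper time
windows, for every FCFS-feasible sequence `M` (with retrieval times `r`) there is an
FCFS-feasible sequence `M'` (with retrieval times `r'`) from the same initial
configuration such that: the relocation count of `M'` equals that of `M`, every
container is retrieved in `M'` no later than in `M` (`r' n ≤ r n` for all
`n ∈ {1,…,N}`), and for every time-step `t` of `M'`, if some container is available
at `t` then the move of `M'` at `t` is not idle. -/
theorem stmt6 (C P N : ℕ) (hN : 1 ≤ N) (d : ℕ → ℕ) (hd : StrictSchedule N d)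
    (T : ℕ) (M : CRPSeq C P N T) (r : ℕ → ℕ) (hM : CRPFeasible M d 0 r) :
    ∃ T', ∃ M' : CRPSeq C P N T', ∃ r',
      M'.conf 0 = M.conf 0 ∧ CRPFeasible M' d 0 r' ∧
      relocCount M' = relocCount M ∧
      (∀ n, 1 ≤ n → n ≤ N → r' n ≤ r n) ∧
      ∀ t, 1 ≤ t → t ≤ T' → (∃ n, AvailableAt M' d n t) → M'.mv t ≠ CRPMove.idle :=
  stmt6_general C P N d hd T M r hM
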